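/- arXiv:2302.03614 — 2 statements merged into one kernel-verified Lean document; each statement's English description precedes it below -/
import Mathlib

section
/- Let A be a finite set with a distinguished element 0, let η > 0 and ℓ > 0, and let w_0 : A → (0, ∞). For t ≥ 0 define w_{t+1}(b) = w_t(b)·exp(−η·c_t(b)), where the functions c_t : A → ℝ satisfy c_t(0) ≤ c_t(b) − ℓ for every b ≠ 0 and every t. Let x_t(b) = w_t(b)/Σ_{b'∈A} w_t(b'). Then for every n ≥ 0, x_n(0) ≥ x_0(0) / (x_0(0) + (1 − x_0(0))·exp(−η·ℓ·n)). -/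
/-!
Compare every other action `b` with `a0` through the weight ratio `w t b / w t a0`: one update
multiplies it by `exp (-η (c t b - c t a0)) ≤ exp (-η ℓ)`, so after `n` updates it has shrunk
by at least `exp (-η ℓ n)`. The normalized weight of `a0` is `(1 + R)⁻¹`, where `R` is the sum
of these ratios, and `x_0/(x_0 + (1 - x_0) E) = (1 + R_0 E)⁻¹`.
-/

open Finset Real

lemma div_sum_eq_inv_one_add_sum_erase {α : Type*} [Fintype α] [DecidableEq α]
    (f : α → ℝ) {a : α} (ha : f a ≠ 0) :
    f a / ∑ b, f b = (1 + ∑ b ∈ univ.erase a, f b / f a)⁻¹ := by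
  rw [← div_self ha, ← sum_div, ← add_div, add_sum_erase _ _ (mem_univ a), inv_div]

lemma inv_one_add_div_eq_inv_one_add_mul (R E : ℝ) (hR : 1 + R ≠ 0) :
    (1 + R)⁻¹ / ((1 + R)⁻¹ + (1 - (1 + R)⁻¹) * E) = (1 + R * E)⁻¹ := by
  field_simp
  ring

section ExponentialWeights

variable {α : Type*} {η ℓ : ℝ} {w c : ℕ → α → ℝ}

lemma exp_weights_pos (hw0 : ∀ b, 0 < w 0 b)
    (hrec : ∀ t b, w (t + 1) b = w t b * exp (-η * c t b)) (t : ℕ) (b : α) :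
    0 < w t b := by
  induction t with
  | zero => exact hw0 b
  | succ t ih => rw [hrec]; positivity

variable {a0 : α} (hη : 0 ≤ η) (hw0 : ∀ b, 0 < w 0 b)
  (hc : ∀ t b, b ≠ a0 → c t a0 ≤ c t b - ℓ)
  (hrec : ∀ t b, w (t + 1) b = w t b * exp (-η * c t b))
include hη hw0 hc hrec

lemma exp_weight_ratio_succ_le (t : ℕ) {b : α} (hb : b ≠ a0) :
    w (t + 1) b / w (t + 1) a0 ≤ exp (-η * ℓ) * (w t b / w t a0) := by
  have hratio : w (t + 1) b / w (t + 1) a0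
      = exp (-η * (c t b - c t a0)) * (w t b / w t a0) := by
    have hsplit : exp (-η * c t b) = exp (-η * (c t b - c t a0)) * exp (-η * c t a0) := by
      rw [← exp_add]
      ring_nf
    rw [hrec, hrec, hsplit]
    field_simp
  have hexp : exp (-η * (c t b - c t a0)) ≤ exp (-η * ℓ) :=
    exp_le_exp.mpr (by nlinarith [hc t b hb])
  rw [hratio]
  have hpos := exp_weights_pos hw0 hrec
  gcongr
  exact div_nonneg (hpos t b).le (hpos t a0).le

lemma exp_weight_ratio_le (n : ℕ) {b : α} (hb : b ≠ a0) :
    w n b / w n a0 ≤ exp (-η * ℓ * n) * (w 0 b / w 0 a0) := by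
  induction n with
  | zero => simp
  | succ n ih =>
    calc w (n + 1) b / w (n + 1) a0
        ≤ exp (-η * ℓ) * (w n b / w n a0) := exp_weight_ratio_succ_le hη hw0 hc hrec n hb
      _ ≤ exp (-η * ℓ) * (exp (-η * ℓ * n) * (w 0 b / w 0 a0)) := by gcongr
      _ = exp (-η * ℓ * ↑(n + 1)) * (w 0 b / w 0 a0) := by
        rw [← mul_assoc, ← exp_add]
        push_cast
        ring_nf

end ExponentialWeights

theorem stmt13_general {α : Type*} [Fintype α] (a0 : α)
    (η ℓ : ℝ) (hη : 0 < η)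
    (w : ℕ → α → ℝ) (hw0 : ∀ b, 0 < w 0 b)
    (c : ℕ → α → ℝ) (hc : ∀ (t : ℕ) (b : α), b ≠ a0 → c t a0 ≤ c t b - ℓ)
    (hrec : ∀ (t : ℕ) (b : α), w (t + 1) b = w t b * Real.exp (-η * c t b))
    (x : ℕ → α → ℝ) (hx : ∀ (t : ℕ) (b : α), x t b = w t b / ∑ b', w t b') :
    ∀ n : ℕ,
      x 0 a0 / (x 0 a0 + (1 - x 0 a0) * Real.exp (-η * ℓ * (n : ℝ))) ≤ x n a0 := by
  classical
  intro n
  set R : ℕ → ℝ := fun t ↦ ∑ b ∈ univ.erase a0, w t b / w t a0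
  have hpos := exp_weights_pos hw0 hrec
  have hR_nonneg (t : ℕ) : 0 ≤ R t :=
    sum_nonneg fun b _ ↦ div_nonneg (hpos t b).le (hpos t a0).le
  have hx_eq (t : ℕ) : x t a0 = (1 + R t)⁻¹ := by
    rw [hx, div_sum_eq_inv_one_add_sum_erase _ (hpos t a0).ne']
  have hR_le : R n ≤ R 0 * exp (-η * ℓ * n) := by
    rw [sum_mul]
    refine sum_le_sum fun b hb ↦ ?_
    rw [mul_comm]
    exact exp_weight_ratio_le hη.le hw0 hc hrec n (ne_of_mem_erase hb)
  rw [hx_eq, hx_eq, inv_one_add_div_eq_inv_one_add_mul _ _ (by linarith [hR_nonneg 0])]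
  exact inv_anti₀ (by linarith [hR_nonneg n]) (by linarith)

/-- Core exponential-weight inequality: if the distinguished action `a0`
undercuts the cost of every other action by at least `ℓ > 0` at every update, then the
normalized exponential weight of `a0` satisfies
`x_n(a0) ≥ x_0(a0) / (x_0(a0) + (1 - x_0(a0)) exp (-η ℓ n))` for every `n`. -/
theorem stmt13 {α : Type*} [Fintype α] [DecidableEq α] (a0 : α)
    (η ℓ : ℝ) (hη : 0 < η) (hℓ : 0 < ℓ)
    (w : ℕ → α → ℝ) (hw0 : ∀ b, 0 < w 0 b)
    (c : ℕ → α → ℝ) (hc : ∀ (t : ℕ) (b : α), b ≠ a0 → c t a0 ≤ c t b - ℓ)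
    (hrec : ∀ (t : ℕ) (b : α), w (t + 1) b = w t b * Real.exp (-η * c t b))
    (x : ℕ → α → ℝ) (hx : ∀ (t : ℕ) (b : α), x t b = w t b / ∑ b', w t b') :
    ∀ n : ℕ,
      x 0 a0 / (x 0 a0 + (1 - x 0 a0) * Real.exp (-η * ℓ * (n : ℝ))) ≤ x n a0 :=
  stmt13_general a0 η ℓ hη w hw0 c hc hrec x hx
end

section
/- Let M > 0 and d > 1, and let (X_t, Z_t)_{t≥0} be ℕ-valued stochastic processes such that almost surely X_t/d ≤ Z_t ≤ X_t and |X_{t+1} − X_t| ≤ M for all t; let F_t = σ(X_0, Z_0, ..., Z_t, X_t). Suppose there exist a function r : ℕ × ℕ → [0, ∞) with sup r < 1, an integer z_0, and a constant A > 0 such that: (a) for every t, almost surely on the event {Z_t ≥ z_0}, P(X_{t+1} > X_t | F_t) ≤ r(Z_t, n_t(Z_t)), where n_t(z) = #{s ≤ t : Z_s = z}; and (b) for every z ≥ z_0, Σ_{m∈ℕ} r(z, m) < A/z. Then X_t is almost surely bounded: P(sup_t X_t < ∞) = 1. -/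
open MeasureTheory

/-- The σ-algebra `σ(X_0, Z_0, ..., Z_t, X_t)` generated by the walk and its companion
process up to time `t`. -/
noncomputable def walkFiltration {Ω : Type*} [MeasurableSpace Ω]
    (X Z : ℕ → Ω → ℕ) (t : ℕ) : MeasurableSpace Ω :=
  ⨆ s ∈ Set.Iic t,
    (MeasurableSpace.comap (X s) inferInstance ⊔ MeasurableSpace.comap (Z s) inferInstance)

open Filter Topology
open scoped ENNReal

/-!
Fix a level `z ≥ z₀`. The `c`-th visit of `Z` to `z` happens at most once, and given the past it
is followed by an upward move of `X` with probability at most `r z c`; hence the expected number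
of upward moves made from level `z` is at most `∑ₘ r z m < A / z`. A path of `X` that starts below
`L` and exceeds `2L` makes at least `(L - M) / M` upward moves while `L ≤ X ≤ 2L`, hence while `Z`
lies in `[L / d, 2L]`, and the expected number of those is at most `∑_{L/d ≤ z ≤ 2L} A / z ≤ 3Ad`.
By Markov's inequality such a crossing has probability `O(1 / L)`, so `X` is almost surely bounded.
-/

lemma measure_inter_le_of_condExp_indicator_le {Ω : Type*} {m m₀ : MeasurableSpace Ω}
    {μ : Measure Ω} [IsFiniteMeasure μ] (hm : m ≤ m₀) {U B : Set Ω} (hU : MeasurableSet U)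
    (hB : MeasurableSet[m] B) {a : ℝ} (ha : 0 ≤ a)
    (h : ∀ᵐ ω ∂μ, ω ∈ B → (μ[U.indicator (fun _ => (1 : ℝ)) | m]) ω ≤ a) :
    μ (U ∩ B) ≤ ENNReal.ofReal a * μ B := by
  have hreal : μ.real (U ∩ B) ≤ a * μ.real B :=
    calc μ.real (U ∩ B) = ∫ ω in B, U.indicator (fun _ => (1 : ℝ)) ω ∂μ := by
          rw [setIntegral_indicator hU, setIntegral_const, smul_eq_mul, mul_one, Set.inter_comm]
      _ = ∫ ω in B, (μ[U.indicator (fun _ => (1 : ℝ)) | m]) ω ∂μ :=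
          (setIntegral_condExp hm ((integrable_const 1).indicator hU) hB).symm
      _ ≤ ∫ _ in B, a ∂μ :=
          setIntegral_mono_ae_restrict integrable_condExp.integrableOn
            (integrable_const a).integrableOn ((ae_restrict_iff' (hm B hB)).2 h)
      _ = a * μ.real B := by rw [setIntegral_const, smul_eq_mul, mul_comm]
  calc μ (U ∩ B) = ENNReal.ofReal (μ.real (U ∩ B)) := (ofReal_measureReal).symm
    _ ≤ ENNReal.ofReal (a * μ.real B) := ENNReal.ofReal_le_ofReal hreal
    _ = ENNReal.ofReal a * μ B := by rw [ENNReal.ofReal_mul ha, ofReal_measureReal]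

lemma sub_le_mul_card_filter_lt {x : ℕ → ℕ} {M : ℝ} (hx : ∀ t, (x (t + 1) : ℝ) - x t ≤ M)
    {a b : ℕ} (hab : a ≤ b) :
    (x b : ℝ) - x a ≤ M * ((Finset.Ico a b).filter (fun t => x t < x (t + 1))).card := by
  rw [← Finset.sum_Ico_sub (fun t => (x t : ℝ)) hab, Finset.card_filter, Nat.cast_sum,
    Finset.mul_sum]
  refine Finset.sum_le_sum fun t _ => ?_
  split_ifs with h
  · simpa using hx t
  · have : (x (t + 1) : ℝ) ≤ x t := by exact_mod_cast not_lt.1 h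
    simpa using this

lemma sub_lt_mul_card_upcrossing {x : ℕ → ℕ} {M : ℝ} (hM : 0 ≤ M)
    (hx : ∀ t, (x (t + 1) : ℝ) - x t ≤ M) {L u : ℕ} (h0 : x 0 < L) (hu : 2 * L < x u) :
    (L : ℝ) - M <
      M * ((Finset.range u).filter (fun t => x t < x (t + 1) ∧ L ≤ x t ∧ x t ≤ 2 * L)).card := by
  classical
  have hex : ∃ n, 2 * L < x n := ⟨u, hu⟩
  set v := Nat.find hex
  have hv : 2 * L < x v := Nat.find_spec hex
  have hbelow : ∀ t < v, x t ≤ 2 * L := fun t ht => not_lt.1 (Nat.find_min hex ht)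
  set a := Nat.findGreatest (fun t => x t < L) v
  have ha : x a < L := Nat.findGreatest_spec (P := fun t => x t < L) (Nat.zero_le v) h0
  have hav : a < v := lt_of_le_of_ne (Nat.findGreatest_le v) fun h => by rw [h] at ha; omega
  have habove : ∀ t, a < t → t ≤ v → L ≤ x t := fun t hat htv =>
    not_lt.1 (Nat.findGreatest_is_greatest (P := fun t => x t < L) hat htv)
  have hsub : (Finset.Ico (a + 1) v).filter (fun t => x t < x (t + 1)) ⊆
      (Finset.range u).filter (fun t => x t < x (t + 1) ∧ L ≤ x t ∧ x t ≤ 2 * L) := by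
    intro t ht
    simp only [Finset.mem_filter, Finset.mem_Ico, Finset.mem_range] at ht ⊢
    exact ⟨ht.1.2.trans_le (Nat.find_min' _ hu), ht.2, habove t (by omega) ht.1.2.le,
      hbelow t ht.1.2⟩
  have hcard := Finset.card_le_card hsub
  have hstart : (x (a + 1) : ℝ) < L + M := by
    have : (x a : ℝ) < L := by exact_mod_cast ha
    linarith [hx a]
  have hend : (2 * L : ℝ) < x v := by exact_mod_cast hv
  calc (L : ℝ) - M < x v - x (a + 1) := by linarith
    _ ≤ M * ((Finset.Ico (a + 1) v).filter (fun t => x t < x (t + 1))).card :=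
        sub_le_mul_card_filter_lt hx hav
    _ ≤ _ := by gcongr

lemma sum_Icc_ceil_div_le {A d : ℝ} (hA : 0 ≤ A) (hd : 0 < d) {L : ℕ} (hL : 1 ≤ L) :
    ∑ z ∈ Finset.Icc ⌈L / d⌉₊ (2 * L), A / z ≤ 3 * A * d := by
  have hLd : 0 < (L : ℝ) / d := by positivity
  calc ∑ z ∈ Finset.Icc ⌈L / d⌉₊ (2 * L), A / z
      ≤ ∑ _z ∈ Finset.Icc ⌈L / d⌉₊ (2 * L), A / (L / d) :=
        Finset.sum_le_sum fun z hz =>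
          div_le_div_of_nonneg_left hA hLd (Nat.ceil_le.1 (Finset.mem_Icc.1 hz).1)
    _ ≤ (3 * L : ℕ) * (A / (L / d)) := by
        rw [Finset.sum_const, nsmul_eq_mul]
        gcongr
        rw [Nat.card_Icc]
        omega
    _ = 3 * A * d := by
        have : (L : ℝ) ≠ 0 := by positivity
        push_cast
        field_simp

section Visits

variable {Ω : Type*} {X Z : ℕ → Ω → ℕ} {M d : ℝ}

-- The paper's `n_t(z)`.
def visitCount (Z : ℕ → Ω → ℕ) (t z : ℕ) (ω : Ω) : ℕ :=
  ((Finset.range (t + 1)).filter (fun s => Z s ω = z)).card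

def visitEvent (Z : ℕ → Ω → ℕ) (z c t : ℕ) : Set Ω := {ω | Z t ω = z ∧ visitCount Z t z ω = c}

def upMove (X : ℕ → Ω → ℕ) (t : ℕ) : Set Ω := {ω | X t ω < X (t + 1) ω}

noncomputable def upMoveCount (X Z : ℕ → Ω → ℕ) (S : Set ℕ) (ω : Ω) : ℝ≥0∞ :=
  ∑' t, (upMove X t ∩ Z t ⁻¹' S).indicator 1 ω

lemma visitCount_lt_visitCount {t t' z : ℕ} {ω : Ω} (htt' : t < t') (h : Z t' ω = z) :
    visitCount Z t z ω < visitCount Z t' z ω := by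
  refine Finset.card_lt_card
    ⟨Finset.filter_subset_filter _ (Finset.range_subset_range.2 (by omega)), fun hsub => ?_⟩
  have := hsub (Finset.mem_filter.2 ⟨Finset.self_mem_range_succ t', h⟩)
  simp only [Finset.mem_filter, Finset.mem_range] at this
  omega

lemma pairwise_disjoint_visitEvent (z c : ℕ) :
    Pairwise (Function.onFun Disjoint (visitEvent Z z c)) := by
  intro t t' hne
  refine Set.disjoint_left.2 fun ω ⟨hz, hc⟩ ⟨hz', hc'⟩ => ?_
  rcases hne.lt_or_gt with h | h
  · exact (visitCount_lt_visitCount h hz').ne (hc.trans hc'.symm)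
  · exact (visitCount_lt_visitCount h hz).ne (hc'.trans hc.symm)

lemma ofReal_le_upMoveCount {ω : Ω} (hM : 0 < M) (hd : 0 < d)
    (hZX : ∀ t, (X t ω : ℝ) / d ≤ Z t ω ∧ (Z t ω : ℝ) ≤ X t ω)
    (hinc : ∀ t, (X (t + 1) ω : ℝ) - X t ω ≤ M) {L u : ℕ} (h0 : X 0 ω < L)
    (hu : 2 * L < X u ω) :
    ENNReal.ofReal ((L - M) / M) ≤ upMoveCount X Z (Finset.Icc ⌈L / d⌉₊ (2 * L)) ω := by
  set T := (Finset.range u).filter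
    (fun t => X t ω < X (t + 1) ω ∧ L ≤ X t ω ∧ X t ω ≤ 2 * L)
  have hT : (L - M) / M ≤ T.card := by
    rw [div_le_iff₀ hM, mul_comm]
    exact (sub_lt_mul_card_upcrossing (x := fun t => X t ω) hM.le hinc h0 hu).le
  have hlevel : ∀ t ∈ T, ω ∈ upMove X t ∩ Z t ⁻¹' ↑(Finset.Icc ⌈L / d⌉₊ (2 * L)) := by
    intro t ht
    obtain ⟨hup, hL, h2L⟩ := (Finset.mem_filter.1 ht).2
    have hL' : (L : ℝ) ≤ X t ω := by exact_mod_cast hL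
    refine ⟨hup, Finset.mem_Icc.2 ⟨Nat.ceil_le.2 ?_, ?_⟩⟩
    · exact (div_le_div_of_nonneg_right hL' hd.le).trans (hZX t).1
    · have : (Z t ω : ℝ) ≤ 2 * L := (hZX t).2.trans (by exact_mod_cast h2L)
      exact_mod_cast this
  calc ENNReal.ofReal ((L - M) / M) ≤ T.card := by
        simpa using ENNReal.ofReal_le_ofReal hT
    _ = ∑ t ∈ T, (upMove X t ∩ Z t ⁻¹' ↑(Finset.Icc ⌈L / d⌉₊ (2 * L))).indicator 1 ω := by
        rw [Finset.card_eq_sum_ones, Nat.cast_sum, Nat.cast_one]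
        exact Finset.sum_congr rfl fun t ht => (Set.indicator_of_mem (hlevel t ht) 1).symm
    _ ≤ upMoveCount X Z (Finset.Icc ⌈L / d⌉₊ (2 * L)) ω := ENNReal.sum_le_tsum T

end Visits

section Measurability

variable {Ω : Type*} [MeasurableSpace Ω] {X Z : ℕ → Ω → ℕ}

lemma walkFiltration_le (hX : ∀ t, Measurable (X t)) (hZ : ∀ t, Measurable (Z t)) (t : ℕ) :
    walkFiltration X Z t ≤ ‹MeasurableSpace Ω› :=
  iSup₂_le fun s _ => sup_le (hX s).comap_le (hZ s).comap_le

lemma measurable_walkFiltration_right {s t : ℕ} (hst : s ≤ t) :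
    Measurable[walkFiltration X Z t] (Z s) :=
  measurable_iff_comap_le.2 <| le_sup_right.trans <|
    le_iSup₂ (f := fun s (_ : s ∈ Set.Iic t) =>
      MeasurableSpace.comap (X s) inferInstance ⊔ MeasurableSpace.comap (Z s) inferInstance)
      s (Set.mem_Iic.2 hst)

lemma measurable_visitCount (t z : ℕ) : Measurable[walkFiltration X Z t] (visitCount Z t z) := by
  have : visitCount Z t z = fun ω => ∑ s ∈ Finset.range (t + 1), if Z s ω = z then 1 else 0 := by
    funext ω; exact Finset.card_filter _ _
  rw [this]
  refine Finset.measurable_sum _ fun s hs => Measurable.ite ?_ measurable_const measurable_const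
  exact measurable_walkFiltration_right (X := X) (Nat.lt_succ_iff.1 (Finset.mem_range.1 hs))
    (measurableSet_singleton z)

lemma measurableSet_visitEvent (z c t : ℕ) :
    MeasurableSet[walkFiltration X Z t] (visitEvent Z z c t) :=
  (measurable_walkFiltration_right (X := X) le_rfl (measurableSet_singleton z)).inter
    (measurable_visitCount t z (measurableSet_singleton c))

lemma measurableSet_upMove (hX : ∀ t, Measurable (X t)) (t : ℕ) : MeasurableSet (upMove X t) :=
  measurableSet_lt (hX t) (hX (t + 1))

lemma measurableSet_upMove_inter_preimage (hX : ∀ t, Measurable (X t))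
    (hZ : ∀ t, Measurable (Z t)) (t : ℕ) (S : Set ℕ) : MeasurableSet (upMove X t ∩ Z t ⁻¹' S) :=
  (measurableSet_upMove hX t).inter (hZ t .of_discrete)

lemma measurable_upMoveCount (hX : ∀ t, Measurable (X t)) (hZ : ∀ t, Measurable (Z t))
    (S : Set ℕ) : Measurable (upMoveCount X Z S) :=
  Measurable.tsum fun t => measurable_one.indicator (measurableSet_upMove_inter_preimage hX hZ t S)

end Measurability

section Reinforcement

variable {Ω : Type*} [MeasurableSpace Ω] {μ : Measure Ω} {X Z : ℕ → Ω → ℕ} {r : ℕ → ℕ → ℝ}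
  {z₀ : ℕ} {M d A : ℝ}

def UpMoveProbBound (μ : Measure Ω) (X Z : ℕ → Ω → ℕ) (r : ℕ → ℕ → ℝ) (z₀ : ℕ) : Prop :=
  ∀ t, ∀ᵐ ω ∂μ, z₀ ≤ Z t ω →
    (μ[(upMove X t).indicator (fun _ => (1 : ℝ)) | walkFiltration X Z t]) ω ≤
      r (Z t ω) (visitCount Z t (Z t ω) ω)

lemma measure_upMove_inter_visitEvent_le [IsFiniteMeasure μ] (hX : ∀ t, Measurable (X t))
    (hZ : ∀ t, Measurable (Z t)) (hcond : UpMoveProbBound μ X Z r z₀)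
    {z c : ℕ} (hz : z₀ ≤ z) (hr0 : 0 ≤ r z c) (t : ℕ) :
    μ (upMove X t ∩ visitEvent Z z c t) ≤ ENNReal.ofReal (r z c) * μ (visitEvent Z z c t) := by
  refine measure_inter_le_of_condExp_indicator_le (walkFiltration_le hX hZ t)
    (measurableSet_upMove hX t) (measurableSet_visitEvent z c t) hr0 ?_
  filter_upwards [hcond t] with ω hω ⟨hZz, hc⟩
  have := hω (hZz ▸ hz)
  rwa [hZz, hc] at this

lemma tsum_measure_upMove_inter_level_le [IsProbabilityMeasure μ] (hX : ∀ t, Measurable (X t))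
    (hZ : ∀ t, Measurable (Z t)) (hcond : UpMoveProbBound μ X Z r z₀) {z : ℕ} (hz : z₀ ≤ z)
    (hr0 : ∀ c, 0 ≤ r z c) (hr : Summable (r z)) :
    ∑' t, μ (upMove X t ∩ Z t ⁻¹' {z}) ≤ ENNReal.ofReal (∑' c, r z c) := by
  have hB : ∀ c t, MeasurableSet (visitEvent Z z c t) := fun c t =>
    walkFiltration_le hX hZ t _ (measurableSet_visitEvent z c t)
  have hsplit : ∀ t, μ (upMove X t ∩ Z t ⁻¹' {z}) =
      ∑' c, μ (upMove X t ∩ visitEvent Z z c t) := by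
    intro t
    rw [← measure_iUnion]
    · congr 1
      ext ω
      simp [visitEvent]
    · exact fun c c' hcc' => Set.disjoint_left.2 fun ω h h' => hcc' (h.2.2.symm.trans h'.2.2)
    · exact fun c => (measurableSet_upMove hX t).inter (hB c t)
  calc ∑' t, μ (upMove X t ∩ Z t ⁻¹' {z})
      = ∑' c, ∑' t, μ (upMove X t ∩ visitEvent Z z c t) := by
        simp_rw [hsplit]
        exact ENNReal.tsum_comm
    _ ≤ ∑' c, ENNReal.ofReal (r z c) * ∑' t, μ (visitEvent Z z c t) := by
        refine ENNReal.tsum_le_tsum fun c => ?_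
        rw [← ENNReal.tsum_mul_left]
        exact ENNReal.tsum_le_tsum
          (measure_upMove_inter_visitEvent_le hX hZ hcond hz (hr0 c))
    _ ≤ ∑' c, ENNReal.ofReal (r z c) := by
        refine ENNReal.tsum_le_tsum fun c => mul_le_of_le_one_right' ?_
        rw [← measure_iUnion (pairwise_disjoint_visitEvent z c) (hB c)]
        exact prob_le_one
    _ = ENNReal.ofReal (∑' c, r z c) := (ENNReal.ofReal_tsum_of_nonneg hr0 hr).symm

lemma lintegral_upMoveCount_le [IsProbabilityMeasure μ] (hX : ∀ t, Measurable (X t))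
    (hZ : ∀ t, Measurable (Z t)) (hcond : UpMoveProbBound μ X Z r z₀) (hr0 : ∀ z c, 0 ≤ r z c)
    (hr : ∀ z, z₀ ≤ z → Summable (r z)) {S : Finset ℕ} (hS : ∀ z ∈ S, z₀ ≤ z) :
    ∫⁻ ω, upMoveCount X Z S ω ∂μ ≤ ∑ z ∈ S, ENNReal.ofReal (∑' c, r z c) := by
  have hsplit : ∀ t, μ (upMove X t ∩ Z t ⁻¹' S) = ∑ z ∈ S, μ (upMove X t ∩ Z t ⁻¹' {z}) := by
    intro t
    have hrestrict : ∀ T, μ (upMove X t ∩ T) = μ.restrict (upMove X t) T := fun T => by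
      rw [Measure.restrict_apply' (measurableSet_upMove hX t), Set.inter_comm]
    simp_rw [hrestrict]
    exact (sum_measure_preimage_singleton S fun z _ => hZ t (measurableSet_singleton z)).symm
  have hmeas := measurableSet_upMove_inter_preimage hX hZ (S := S)
  calc ∫⁻ ω, upMoveCount X Z S ω ∂μ
      = ∑' t, ∫⁻ ω, (upMove X t ∩ Z t ⁻¹' S).indicator 1 ω ∂μ :=
        lintegral_tsum fun t => (measurable_one.indicator (hmeas t)).aemeasurable
    _ = ∑' t, μ (upMove X t ∩ Z t ⁻¹' S) := tsum_congr fun t => lintegral_indicator_one (hmeas t)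
    _ = ∑ z ∈ S, ∑' t, μ (upMove X t ∩ Z t ⁻¹' {z}) := by
        simp_rw [hsplit]
        exact Summable.tsum_finsetSum fun _ _ => ENNReal.summable
    _ ≤ ∑ z ∈ S, ENNReal.ofReal (∑' c, r z c) := Finset.sum_le_sum fun z hz =>
        tsum_measure_upMove_inter_level_le hX hZ hcond (hS z hz) (hr0 z) (hr z (hS z hz))

lemma measure_crossing_le [IsProbabilityMeasure μ] (hX : ∀ t, Measurable (X t))
    (hZ : ∀ t, Measurable (Z t)) (hM : 0 < M) (hd : 0 < d) (hA : 0 ≤ A)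
    (hbound : ∀ᵐ ω ∂μ, ∀ t : ℕ,
      ((X t ω : ℝ) / d ≤ (Z t ω : ℝ) ∧ (Z t ω : ℝ) ≤ (X t ω : ℝ)) ∧
        |((X (t + 1) ω : ℝ)) - (X t ω : ℝ)| ≤ M)
    (hcond : UpMoveProbBound μ X Z r z₀) (hr0 : ∀ z m, 0 ≤ r z m)
    (hsum : ∀ z : ℕ, z₀ ≤ z → Summable (r z) ∧ ∑' m, r z m < A / (z : ℝ))
    {L : ℕ} (hML : M < L) (hz₀L : d * z₀ ≤ L) :
    μ {ω | X 0 ω < L ∧ ∃ u, 2 * L < X u ω} ≤ ENNReal.ofReal (3 * A * d * M / (L - M)) := by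
  set S := Finset.Icc ⌈L / d⌉₊ (2 * L)
  have hL : 1 ≤ L := Nat.cast_pos.1 (hM.trans hML)
  have hS : ∀ z ∈ S, z₀ ≤ z := fun z hz => by
    have : (z₀ : ℝ) ≤ L / d := by rw [le_div_iff₀ hd, mul_comm]; exact hz₀L
    exact Nat.cast_le.1 (this.trans (Nat.ceil_le.1 (Finset.mem_Icc.1 hz).1))
  have hε : 0 < ((L : ℝ) - M) / M := div_pos (by linarith) hM
  have hmean : ∫⁻ ω, upMoveCount X Z S ω ∂μ ≤ ENNReal.ofReal (3 * A * d) :=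
    calc ∫⁻ ω, upMoveCount X Z S ω ∂μ ≤ ∑ z ∈ S, ENNReal.ofReal (∑' c, r z c) :=
          lintegral_upMoveCount_le hX hZ hcond hr0 (fun z hz => (hsum z hz).1) hS
      _ ≤ ∑ z ∈ S, ENNReal.ofReal (A / z) := Finset.sum_le_sum fun z hz =>
          ENNReal.ofReal_le_ofReal (hsum z (hS z hz)).2.le
      _ = ENNReal.ofReal (∑ z ∈ S, A / z) :=
          (ENNReal.ofReal_sum_of_nonneg fun z _ => by positivity).symm
      _ ≤ ENNReal.ofReal (3 * A * d) := ENNReal.ofReal_le_ofReal (sum_Icc_ceil_div_le hA hd hL)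
  calc μ {ω | X 0 ω < L ∧ ∃ u, 2 * L < X u ω}
      ≤ μ {ω | ENNReal.ofReal ((L - M) / M) ≤ upMoveCount X Z S ω} := by
        refine measure_mono_ae (hbound.mono fun ω hω ⟨h0, u, hu⟩ => ?_)
        exact ofReal_le_upMoveCount hM hd (fun t => (hω t).1) (fun t => (abs_le.1 (hω t).2).2)
          h0 hu
    _ ≤ (∫⁻ ω, upMoveCount X Z S ω ∂μ) / ENNReal.ofReal ((L - M) / M) :=
        meas_ge_le_lintegral_div (measurable_upMoveCount hX hZ S).aemeasurable
          (ENNReal.ofReal_pos.2 hε).ne' ENNReal.ofReal_ne_top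
    _ ≤ ENNReal.ofReal (3 * A * d) / ENNReal.ofReal ((L - M) / M) := by gcongr
    _ = ENNReal.ofReal (3 * A * d * M / (L - M)) := by
        rw [← ENNReal.ofReal_div_of_pos hε, div_div_eq_mul_div]

end Reinforcement

theorem stmt17_general {Ω : Type*} [MeasurableSpace Ω] (μ : Measure Ω) [IsProbabilityMeasure μ]
    (M d : ℝ) (hM : 0 < M) (hd : 1 < d)
    (X Z : ℕ → Ω → ℕ) (hX : ∀ t, Measurable (X t)) (hZ : ∀ t, Measurable (Z t))
    (hbound : ∀ᵐ ω ∂μ, ∀ t : ℕ,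
      ((X t ω : ℝ) / d ≤ (Z t ω : ℝ) ∧ (Z t ω : ℝ) ≤ (X t ω : ℝ)) ∧
        |((X (t + 1) ω : ℝ)) - (X t ω : ℝ)| ≤ M)
    (r : ℕ → ℕ → ℝ) (hr0 : ∀ z m, 0 ≤ r z m)
    (z₀ : ℕ) (A : ℝ) (hA : 0 < A)
    (hsum : ∀ z : ℕ, z₀ ≤ z → Summable (r z) ∧ ∑' m, r z m < A / (z : ℝ))
    (hcond : ∀ t : ℕ, ∀ᵐ ω ∂μ, z₀ ≤ Z t ω →
      (μ[Set.indicator {ω' | X t ω' < X (t + 1) ω'} (fun _ => (1 : ℝ)) |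
          walkFiltration X Z t]) ω
        ≤ r (Z t ω) (((Finset.range (t + 1)).filter (fun s => Z s ω = Z t ω)).card)) :
    ∀ᵐ ω ∂μ, ∃ B : ℕ, ∀ t : ℕ, X t ω ≤ B := by
  have hbound_tendsto : Tendsto (fun L : ℕ => ENNReal.ofReal (3 * A * d * M / (L - M))) atTop
      (𝓝 0) := by
    rw [← ENNReal.ofReal_zero]
    refine ENNReal.tendsto_ofReal (tendsto_const_nhds.div_atTop ?_)
    exact tendsto_atTop_add_const_right _ (-M) tendsto_natCast_atTop_atTop
  set F : ℕ → Set Ω := fun j => {ω | X 0 ω < j ∧ ∀ B, ∃ t, B < X t ω}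
  have hnull : ∀ j, μ (F j) = 0 := by
    intro j
    refine le_antisymm (ge_of_tendsto hbound_tendsto ?_) zero_le
    filter_upwards [eventually_ge_atTop j, eventually_gt_atTop ⌈M⌉₊,
      eventually_ge_atTop ⌈d * z₀⌉₊] with L hjL hML hz₀L
    have hsub : F j ⊆ {ω | X 0 ω < L ∧ ∃ u, 2 * L < X u ω} := fun ω hω =>
      ⟨hω.1.trans_le hjL, hω.2 (2 * L)⟩
    exact (measure_mono hsub).trans (measure_crossing_le hX hZ hM (by linarith) hA.le hbound
      hcond hr0 hsum (Nat.lt_of_ceil_lt hML) (Nat.ceil_le.1 hz₀L))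
  rw [ae_iff]
  refine measure_mono_null (fun ω hω => ?_) (measure_iUnion_null hnull)
  simp only [Set.mem_ofPred_eq, not_exists, not_forall, not_le] at hω
  exact Set.mem_iUnion.2 ⟨X 0 ω + 1, Nat.lt_succ_self _, hω⟩

/-- Reinforced random walk lemma: if `X_t / d ≤ Z_t ≤ X_t`, increments of
`X` are bounded by `M`, the conditional probability of an upward move of `X` at a time when
`Z_t = z ≥ z₀` has been visited `m` times is at most `r z m`, with `sup r < 1` and
`Σ_m r z m < A / z` for `z ≥ z₀`, then `X` is almost surely bounded. -/
theorem stmt17 {Ω : Type*} [MeasurableSpace Ω] (μ : Measure Ω) [IsProbabilityMeasure μ]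
    (M d : ℝ) (hM : 0 < M) (hd : 1 < d)
    (X Z : ℕ → Ω → ℕ) (hX : ∀ t, Measurable (X t)) (hZ : ∀ t, Measurable (Z t))
    (hbound : ∀ᵐ ω ∂μ, ∀ t : ℕ,
      ((X t ω : ℝ) / d ≤ (Z t ω : ℝ) ∧ (Z t ω : ℝ) ≤ (X t ω : ℝ)) ∧
        |((X (t + 1) ω : ℝ)) - (X t ω : ℝ)| ≤ M)
    (r : ℕ → ℕ → ℝ) (hr0 : ∀ z m, 0 ≤ r z m)
    (p : ℝ) (hp : p < 1) (hrp : ∀ z m, r z m ≤ p)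
    (z₀ : ℕ) (A : ℝ) (hA : 0 < A)
    (hsum : ∀ z : ℕ, z₀ ≤ z → Summable (r z) ∧ ∑' m, r z m < A / (z : ℝ))
    (hcond : ∀ t : ℕ, ∀ᵐ ω ∂μ, z₀ ≤ Z t ω →
      (μ[Set.indicator {ω' | X t ω' < X (t + 1) ω'} (fun _ => (1 : ℝ)) |
          walkFiltration X Z t]) ω
        ≤ r (Z t ω) (((Finset.range (t + 1)).filter (fun s => Z s ω = Z t ω)).card)) :
    ∀ᵐ ω ∂μ, ∃ B : ℕ, ∀ t : ℕ, X t ω ≤ B :=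
  stmt17_general μ M d hM hd X Z hX hZ hbound r hr0 z₀ A hA hsum hcond
end
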